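/- Let (X, d) be a compact metric space, f : X → X a continuous map, and m a Borel probability measure on X. Let O be the set of SRB-like measures for f (with respect to m). If K ⊆ P(X) is any nonempty weak-*-compact set of Borel probability measures such that pω(x) ⊆ K for m-almost every x ∈ X, then O ⊆ K; that is, O is the minimal nonempty weak-*-compact set of probability measures containing the weak-* limit points of the empirical measures of m-almost every point. -/

import Mathlib

open MeasureTheory Filter Set
open scoped ENNReal NNReal

variable {X : Type*} [MetricSpace X] [CompactSpace X] [MeasurableSpace X] [BorelSpace X]

/-- The `n`-th empirical measure (with `n+1` points) of `x` under iteration of `f`: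
`σ_{n+1}(x) = (1/(n+1)) ∑_{i=0}^{n} δ_{f^i(x)}`. -/
noncomputable def empiricalMeasure (f : X → X) (x : X) (n : ℕ) : Measure X :=
  ((n + 1 : ℝ≥0∞))⁻¹ • ∑ i ∈ Finset.range (n + 1), Measure.dirac (f^[i] x)

theorem empiricalMeasure_isProbabilityMeasure (f : X → X) (x : X) (n : ℕ) :
    IsProbabilityMeasure (empiricalMeasure f x n) := by
  constructor
  simp [empiricalMeasure, Measure.smul_apply, Measure.finset_sum_apply,
    Measure.dirac_apply_of_mem (Set.mem_univ _)]
  exact ENNReal.inv_mul_cancel (by simp) (by simp)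

/-- The `n`-th empirical measure as a Borel probability measure. -/
noncomputable def empirical (f : X → X) (x : X) (n : ℕ) : ProbabilityMeasure X :=
  ⟨empiricalMeasure f x n, empiricalMeasure_isProbabilityMeasure f x n⟩

/-- `pω(x)`: the set of weak-* limit points of the sequence of empirical measures of `x`,
in the space of Borel probability measures with the weak-* topology. -/
def pOmega (f : X → X) (x : X) : Set (ProbabilityMeasure X) :=
  {ν | MapClusterPt ν atTop (empirical f x)}

/-- `μ` is SRB-like (observable) for `f` w.r.t. the reference measure `m`: for every `ε > 0`,
the set `A_ε(μ)` of points `x` having some weak-* limit point of its empirical measures at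
Lévy–Prokhorov distance `< ε` from `μ` has positive `m`-measure. -/
def IsSRBLike (f : X → X) (m : Measure X) (μ : ProbabilityMeasure X) : Prop :=
  ∀ ε : ℝ, 0 < ε →
    0 < m {x | ∃ ν ∈ pOmega f x,
      levyProkhorovDist (ν : Measure X) (μ : Measure X) < ε}

/-!
Since `A_ε(μ)` has positive measure, it meets the full-measure set where `pω(x) ⊆ K`, so every
SRB-like `μ` is within Lévy–Prokhorov distance `ε` of `K` for all `ε > 0`. Convergence in the
Lévy–Prokhorov metric implies weak-* convergence, so `μ` lies in the weak-* closure of `K`,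
which is `K` itself by compactness.
-/

theorem ProbabilityMeasure.mem_closure_of_forall_levyProkhorovDist_lt
    {Ω : Type*} [PseudoMetricSpace Ω] [MeasurableSpace Ω] [OpensMeasurableSpace Ω]
    {K : Set (ProbabilityMeasure Ω)} {μ : ProbabilityMeasure Ω}
    (h : ∀ ε > 0, ∃ ν ∈ K, levyProkhorovDist (ν : Measure Ω) μ < ε) : μ ∈ closure K := by
  have hLP : LevyProkhorov.ofMeasure μ ∈ closure (LevyProkhorov.toMeasure ⁻¹' K) :=
    Metric.mem_closure_iff.2 fun ε hε ↦ by
      obtain ⟨ν, hνK, hν⟩ := h ε hε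
      exact ⟨LevyProkhorov.ofMeasure ν, hνK, by rwa [dist_comm]⟩
  exact map_mem_closure LevyProkhorov.continuous_toMeasure_probabilityMeasure hLP
    (mapsTo_preimage _ _)

theorem IsSRBLike.exists_mem_levyProkhorovDist_lt {f : X → X} {m : Measure X}
    {μ : ProbabilityMeasure X} (hμ : IsSRBLike f m μ) {K : Set (ProbabilityMeasure X)}
    (hK : ∀ᵐ x ∂m, pOmega f x ⊆ K) {ε : ℝ} (hε : 0 < ε) :
    ∃ ν ∈ K, levyProkhorovDist (ν : Measure X) μ < ε := by
  have hA := frequently_ae_mem_iff.2 (hμ ε hε).ne'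
  obtain ⟨x, hxK, ν, hνx, hν⟩ := (hK.and_frequently hA).exists
  exact ⟨ν, hxK hνx, hν⟩

theorem SRBLike_minimal_general (f : X → X) (m : Measure X)
    (K : Set (ProbabilityMeasure X)) (hKc : IsCompact K)
    (hK : ∀ᵐ x ∂m, pOmega f x ⊆ K) :
    {μ : ProbabilityMeasure X | IsSRBLike f m μ} ⊆ K := fun _ hμ ↦
  hKc.isClosed.closure_subset <| ProbabilityMeasure.mem_closure_of_forall_levyProkhorovDist_lt
    fun _ hε ↦ hμ.exists_mem_levyProkhorovDist_lt hK hε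

/-- Minimality: the set `O` of SRB-like measures is contained in any nonempty
weak-*-compact set `K` of probability measures such that `pω(x) ⊆ K` for `m`-a.e. `x`. -/
theorem SRBLike_minimal (f : X → X) (hf : Continuous f)
    (m : Measure X) [IsProbabilityMeasure m]
    (K : Set (ProbabilityMeasure X)) (hKne : K.Nonempty) (hKc : IsCompact K)
    (hK : ∀ᵐ x ∂m, pOmega f x ⊆ K) :
    {μ : ProbabilityMeasure X | IsSRBLike f m μ} ⊆ K :=
  SRBLike_minimal_general f m K hKc hK
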